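/- arXiv:1705.06782 — 11 statements merged into one kernel-verified Lean document; each statement's English description precedes it below -/
import Mathlib

section
/- Let Y = G + iB be an n×n complex matrix, where G and B are real n×n matrices, G is symmetric positive definite, and B is symmetric. Then Y is invertible. -/
open Matrix

/-- Lemma 1 (invertibility part): if `Y = G + iB` with `G` real symmetric positive
definite and `B` real symmetric, then `Y` is invertible. -/
theorem complex_matrix_invertible_of_rePosDef_imSymm {n : ℕ}
    (G B : Matrix (Fin n) (Fin n) ℝ) (Y : Matrix (Fin n) (Fin n) ℂ)
    (hRe : ∀ i j, (Y i j).re = G i j) (hIm : ∀ i j, (Y i j).im = B i j)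
    (hGsym : G = Gᵀ)
    (hGpd : ∀ x : Fin n → ℝ, x ≠ 0 → 0 < x ⬝ᵥ (G *ᵥ x))
    (hBsym : B = Bᵀ) :
    IsUnit Y := by
  have hGsemi : ∀ x : Fin n → ℝ, 0 ≤ x ⬝ᵥ (G *ᵥ x) := by
    intro x
    by_cases hx : x = 0
    · simp [hx]
    · exact (hGpd x hx).le
  rw [← Matrix.mulVec_injective_iff_isUnit]
  rw [← Matrix.coe_mulVecLin, injective_iff_map_eq_zero]
  intro z hz
  set x : Fin n → ℝ := fun i => (z i).re with hxdef
  set y : Fin n → ℝ := fun i => (z i).im with hydef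
  have hre : G *ᵥ x - B *ᵥ y = 0 := by
    funext i
    have := congrFun hz i
    have h2 : ((Y *ᵥ z) i).re = 0 := by
      simp only [Matrix.coe_mulVecLin] at this
      rw [this]; simp
    simp only [Matrix.mulVec, dotProduct, Complex.re_sum, Complex.mul_re,
      hRe, hIm] at h2
    simpa [Matrix.mulVec, dotProduct, Finset.sum_sub_distrib] using h2
  have him : B *ᵥ x + G *ᵥ y = 0 := by
    funext i
    have := congrFun hz i
    have h2 : ((Y *ᵥ z) i).im = 0 := by
      simp only [Matrix.coe_mulVecLin] at this
      rw [this]; simp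
    simp only [Matrix.mulVec, dotProduct, Complex.im_sum, Complex.mul_im,
      hRe, hIm] at h2
    simp only [Matrix.mulVec, dotProduct, Finset.sum_add_distrib, Pi.add_apply,
      Pi.zero_apply, hxdef, hydef]
    rw [Finset.sum_add_distrib] at h2
    linarith [h2]
  -- derive x ⬝ Gx + y ⬝ Gy = 0
  have e1 : x ⬝ᵥ (G *ᵥ x) = x ⬝ᵥ (B *ᵥ y) := by
    have : G *ᵥ x = B *ᵥ y := by
      have := sub_eq_zero.mp hre
      exact this
    rw [this]
  have e2 : y ⬝ᵥ (G *ᵥ y) = - (y ⬝ᵥ (B *ᵥ x)) := by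
    have : G *ᵥ y = -(B *ᵥ x) := by
      rw [eq_neg_iff_add_eq_zero, add_comm]; exact him
    rw [this, dotProduct_neg]
  have eB : x ⬝ᵥ (B *ᵥ y) = y ⬝ᵥ (B *ᵥ x) := by
    rw [Matrix.dotProduct_mulVec, ← Matrix.mulVec_transpose, ← hBsym, dotProduct_comm]
  have hsum : x ⬝ᵥ (G *ᵥ x) + y ⬝ᵥ (G *ᵥ y) = 0 := by
    rw [e1, e2, eB]; ring
  have hx0 : x = 0 := by
    by_contra hx
    have := hGpd x hx
    have := hGsemi y
    linarith
  have hy0 : y = 0 := by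
    by_contra hy
    have := hGpd y hy
    have := hGsemi x
    linarith
  funext i
  have h1 : (z i).re = 0 := congrFun hx0 i
  have h2 : (z i).im = 0 := congrFun hy0 i
  exact Complex.ext h1 h2
end

section
/- Let Y = G + iB be an n×n complex matrix, where G and B are real n×n matrices, G is symmetric positive definite, and B is symmetric. Then Y is invertible and the real part Re[Y⁻¹] of its inverse is a symmetric positive definite real matrix. -/
open Matrix

theorem quadre {n : ℕ} (G C : Matrix (Fin n) (Fin n) ℝ) (hC : C = Cᵀ)
    (M : Matrix (Fin n) (Fin n) ℂ)
    (hM : ∀ i j, M i j = (G i j : ℂ) + (C i j : ℂ) * Complex.I)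
    (w : Fin n → ℂ) :
    (star w ⬝ᵥ M *ᵥ w).re
      = (fun i => (w i).re) ⬝ᵥ G *ᵥ (fun i => (w i).re)
        + (fun i => (w i).im) ⬝ᵥ G *ᵥ (fun i => (w i).im) := by
  simp only [dotProduct, mulVec, Pi.star_apply, Complex.re_sum, Finset.mul_sum,
    Complex.mul_re, Complex.mul_im, hM]
  have h2 : ∀ i j : Fin n, C j i * ((w j).im * (w i).re - (w j).re * (w i).im)
      = - (C i j * ((w i).im * (w j).re - (w i).re * (w j).im)) := by
    intro i j
    have hji : C j i = C i j := congrFun (congrFun hC j) i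
    rw [hji]; ring
  have hcross : ∑ i, ∑ j, C i j * ((w i).im * (w j).re - (w i).re * (w j).im) = 0 := by
    have h3 : ∑ i, ∑ j, C i j * ((w i).im * (w j).re - (w i).re * (w j).im)
        = - ∑ i, ∑ j, C i j * ((w i).im * (w j).re - (w i).re * (w j).im) := by
      conv_lhs => rw [Finset.sum_comm]
      rw [← Finset.sum_neg_distrib]
      apply Finset.sum_congr rfl; intro j _
      rw [← Finset.sum_neg_distrib]
      exact Finset.sum_congr rfl fun i _ => h2 j i
    linarith
  calc ∑ i, ∑ j, ((star (w i)).re * (((G i j : ℂ) + (C i j : ℂ) * Complex.I) * w j).re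
        - (star (w i)).im * (((G i j : ℂ) + (C i j : ℂ) * Complex.I) * w j).im)
      = ∑ i, ∑ j, (G i j * ((w i).re * (w j).re) + G i j * ((w i).im * (w j).im)
          + C i j * ((w i).im * (w j).re - (w i).re * (w j).im)) := by
        apply Finset.sum_congr rfl; intro i _; apply Finset.sum_congr rfl; intro j _
        simp [Complex.add_re, Complex.add_im, Complex.mul_re, Complex.mul_im]
        ring
    _ = _ := by
        simp_rw [Finset.sum_add_distrib]
        rw [hcross]
        simp only [dotProduct, mulVec, Finset.mul_sum, add_zero]
        congr 1 <;>
        · apply Finset.sum_congr rfl; intro i _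
          apply Finset.sum_congr rfl; intro j _
          ring

/-- Lemma 1: if `Y = G + iB` with `G` real symmetric positive definite and `B` real
symmetric, then `Y` is invertible and `Re[Y⁻¹]` is symmetric positive definite. -/
theorem complex_matrix_inv_re_posDef {n : ℕ}
    (G B : Matrix (Fin n) (Fin n) ℝ) (Y : Matrix (Fin n) (Fin n) ℂ)
    (hRe : ∀ i j, (Y i j).re = G i j) (hIm : ∀ i j, (Y i j).im = B i j)
    (hGsym : G = Gᵀ)
    (hGpd : ∀ x : Fin n → ℝ, x ≠ 0 → 0 < x ⬝ᵥ (G *ᵥ x))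
    (hBsym : B = Bᵀ) :
    IsUnit Y ∧ (Y⁻¹.map Complex.re) = (Y⁻¹.map Complex.re)ᵀ ∧
      ∀ x : Fin n → ℝ, x ≠ 0 → 0 < x ⬝ᵥ ((Y⁻¹.map Complex.re) *ᵥ x) := by
  -- G is positive semidefinite
  have hGpsd : ∀ x : Fin n → ℝ, 0 ≤ x ⬝ᵥ (G *ᵥ x) := by
    intro x
    by_cases hx : x = 0
    · simp [hx]
    · exact (hGpd x hx).le
  -- positivity of the split quadratic form
  have hpos : ∀ w : Fin n → ℂ, w ≠ 0 →
      0 < (fun i => (w i).re) ⬝ᵥ G *ᵥ (fun i => (w i).re)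
        + (fun i => (w i).im) ⬝ᵥ G *ᵥ (fun i => (w i).im) := by
    intro w hw
    by_cases ha : (fun i => (w i).re) = 0
    · have hb : (fun i => (w i).im) ≠ 0 := by
        intro hb
        apply hw
        funext i
        have h1 : (w i).re = 0 := congrFun ha i
        have h2 : (w i).im = 0 := congrFun hb i
        exact Complex.ext h1 h2
      have := hGpd _ hb
      have := hGpsd (fun i => (w i).re)
      linarith
    · have := hGpd _ ha
      have := hGpsd (fun i => (w i).im)
      linarith
  have hGs : ∀ i j, G j i = G i j := fun i j => congrFun (congrFun hGsym j) i
  have hBs : ∀ i j, B j i = B i j := fun i j => congrFun (congrFun hBsym j) i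
  -- entrywise form of Y
  have hY : ∀ i j, Y i j = (G i j : ℂ) + (B i j : ℂ) * Complex.I := by
    intro i j
    apply Complex.ext <;> simp [hRe, hIm]
  -- Y is injective on vectors
  have hker : ∀ v : Fin n → ℂ, Y *ᵥ v = 0 → v = 0 := by
    intro v hv
    by_contra hv0
    have h := quadre G B hBsym Y hY v
    rw [hv] at h
    simp at h
    have := hpos v hv0
    linarith [h ▸ this]
  have hinj : Function.Injective (Y.mulVec) := by
    intro u v huv
    have : Y *ᵥ (u - v) = 0 := by
      rw [Matrix.mulVec_sub, huv, sub_self]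
    have := hker _ this
    exact sub_eq_zero.mp this
  have hYunit : IsUnit Y := Matrix.mulVec_injective_iff_isUnit.mp hinj
  refine ⟨hYunit, ?_, ?_⟩
  · -- symmetry
    have hYsym : Yᵀ = Y := by
      ext i j
      apply Complex.ext
      · simp only [transpose_apply, hRe]
        linarith [hGs i j]
      · simp only [transpose_apply, hIm]
        linarith [hBs i j]
    have : (Y⁻¹)ᵀ = Y⁻¹ := by rw [Matrix.transpose_nonsing_inv, hYsym]
    rw [← Matrix.transpose_map, this]
  · -- positive definiteness
    intro x hx
    set xc : Fin n → ℂ := fun i => (x i : ℂ) with hxc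
    set w : Fin n → ℂ := Y⁻¹ *ᵥ xc with hw
    have hYw : Y *ᵥ w = xc := by
      rw [hw, Matrix.mulVec_mulVec, Matrix.mul_nonsing_inv Y
        ((Matrix.isUnit_iff_isUnit_det Y).mp hYunit), Matrix.one_mulVec]
    have hw0 : w ≠ 0 := by
      intro h0
      apply hx
      funext i
      have : xc = 0 := by rw [← hYw, h0, Matrix.mulVec_zero]
      have h2 := congrFun this i
      simp only [hxc, Pi.zero_apply, Complex.ofReal_eq_zero] at h2
      exact h2
    -- express the real quadratic form
    have hform : x ⬝ᵥ ((Y⁻¹.map Complex.re) *ᵥ x) = (star xc ⬝ᵥ Y⁻¹ *ᵥ xc).re := by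
      simp [dotProduct, mulVec, Complex.re_sum, Finset.mul_sum, Matrix.map_apply,
        Complex.mul_re, hxc]
    have hstep : star xc ⬝ᵥ Y⁻¹ *ᵥ xc = star w ⬝ᵥ Yᴴ *ᵥ w := by
      rw [← hw, ← hYw, star_mulVec, ← Matrix.dotProduct_mulVec]
    have hMH : ∀ i j, Yᴴ i j = (G i j : ℂ) + ((-B) i j : ℂ) * Complex.I := by
      intro i j
      simp [conjTranspose_apply, hY, Complex.ext_iff]
      constructor
      · linarith [hGs i j]
      · linarith [hBs i j]
    have hq := quadre G (-B) (by rw [Matrix.transpose_neg, ← hBsym]) Yᴴ hMH w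
    rw [hform, hstep, hq]
    exact hpos w hw0
end

section
/- Let Y = G + iB be an n×n complex matrix, where G and B are real n×n matrices, G is symmetric positive definite, and B is symmetric. Then the real matrix G + B·G⁻¹·B is symmetric positive definite (in particular invertible), and the real part of Y⁻¹ satisfies Re[Y⁻¹] = (G + B·G⁻¹·B)⁻¹. -/
/-!
With `M = G + B G⁻¹ B`, a direct multiplication gives
`(G + iB) (M⁻¹ - i G⁻¹ B M⁻¹) = 1`, so `Re[Y⁻¹] = M⁻¹`. The matrix `M` is positive definite
as the sum of the positive definite `G` and the positive semidefinite `B G⁻¹ Bᴴ`.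
-/

open Matrix

namespace Matrix

variable {l m n : Type*}

def ofReIm (P Q : Matrix m n ℝ) : Matrix m n ℂ :=
  P.map (↑) + Complex.I • Q.map (↑)

@[simp] lemma re_ofReIm_apply (P Q : Matrix m n ℝ) (i : m) (j : n) :
    (ofReIm P Q i j).re = P i j := by
  simp [ofReIm]

@[simp] lemma im_ofReIm_apply (P Q : Matrix m n ℝ) (i : m) (j : n) :
    (ofReIm P Q i j).im = Q i j := by
  simp [ofReIm]

lemma ofReIm_mul [Fintype m] (A B : Matrix l m ℝ) (C D : Matrix m n ℝ) :
    ofReIm A B * ofReIm C D = ofReIm (A * C - B * D) (A * D + B * C) := by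
  ext i j
  simp [Complex.ext_iff, mul_apply, Complex.re_sum, Complex.im_sum,
    Finset.sum_add_distrib, Finset.sum_sub_distrib]

lemma ofReIm_one_zero [DecidableEq n] : ofReIm (1 : Matrix n n ℝ) 0 = 1 := by
  ext i j
  by_cases h : i = j <;> simp [Complex.ext_iff, h, one_apply]

@[simp] lemma map_re_ofReIm (P Q : Matrix m n ℝ) : (ofReIm P Q).map Complex.re = P := by
  ext i j
  simp

lemma inv_ofReIm [Fintype n] [DecidableEq n] {G B : Matrix n n ℝ} (hG : IsUnit G.det)
    (hM : IsUnit (G + B * G⁻¹ * B).det) :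
    (ofReIm G B)⁻¹ = ofReIm (G + B * G⁻¹ * B)⁻¹ (-(G⁻¹ * B * (G + B * G⁻¹ * B)⁻¹)) := by
  set M := G + B * G⁻¹ * B with hM_def
  refine inv_eq_right_inv ?_
  rw [ofReIm_mul, ← ofReIm_one_zero]
  congr 1
  · calc G * M⁻¹ - B * -(G⁻¹ * B * M⁻¹) = M * M⁻¹ := by rw [hM_def]; noncomm_ring
      _ = 1 := mul_nonsing_inv M hM
  · calc G * -(G⁻¹ * B * M⁻¹) + B * M⁻¹ = -(G * (G⁻¹ * (B * M⁻¹))) + B * M⁻¹ := by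
          noncomm_ring
      _ = 0 := by rw [mul_nonsing_inv_cancel_left G _ hG, neg_add_cancel]

lemma posDef_iff_isSymm_dotProduct_mulVec {R : Type*} [CommRing R] [PartialOrder R] [StarRing R]
    [TrivialStar R] [Fintype n] {M : Matrix n n R} :
    M.PosDef ↔ M.IsSymm ∧ ∀ x, x ≠ 0 → 0 < x ⬝ᵥ (M *ᵥ x) := by
  simp [posDef_iff_dotProduct_mulVec]

lemma PosDef.add_mul_inv_mul {K : Type*} [Field K] [PartialOrder K] [StarRing K]
    [StarOrderedRing K] [Fintype n] [DecidableEq n] {G B : Matrix n n K} (hG : G.PosDef)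
    (hB : B.IsHermitian) :
    (G + B * G⁻¹ * B).PosDef := by
  simpa only [hB.eq] using hG.add_posSemidef (hG.posSemidef.inv.mul_mul_conjTranspose_same B)

end Matrix

/-- Formula (39c): `Re[Y⁻¹] = (G + B G⁻¹ B)⁻¹`, where `G + B G⁻¹ B` is symmetric
positive definite (in particular invertible). -/
theorem complex_matrix_inv_re_formula {n : ℕ}
    (G B : Matrix (Fin n) (Fin n) ℝ) (Y : Matrix (Fin n) (Fin n) ℂ)
    (hRe : ∀ i j, (Y i j).re = G i j) (hIm : ∀ i j, (Y i j).im = B i j)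
    (hGsym : G = Gᵀ)
    (hGpd : ∀ x : Fin n → ℝ, x ≠ 0 → 0 < x ⬝ᵥ (G *ᵥ x))
    (hBsym : B = Bᵀ) :
    (G + B * G⁻¹ * B) = (G + B * G⁻¹ * B)ᵀ ∧
    (∀ x : Fin n → ℝ, x ≠ 0 → 0 < x ⬝ᵥ ((G + B * G⁻¹ * B) *ᵥ x)) ∧
    IsUnit (G + B * G⁻¹ * B) ∧
    Y⁻¹.map Complex.re = (G + B * G⁻¹ * B)⁻¹ := by
  have hG : G.PosDef := posDef_iff_isSymm_dotProduct_mulVec.2 ⟨hGsym.symm, hGpd⟩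
  have hM : (G + B * G⁻¹ * B).PosDef := hG.add_mul_inv_mul (isHermitian_iff_isSymm.2 hBsym.symm)
  obtain ⟨hMsym, hMpos⟩ := posDef_iff_isSymm_dotProduct_mulVec.1 hM
  have hY : Y = ofReIm G B := by
    ext i j
    simp [Complex.ext_iff, hRe, hIm]
  refine ⟨hMsym.symm, hMpos, hM.isUnit, ?_⟩
  rw [hY, inv_ofReIm ((isUnit_iff_isUnit_det G).1 hG.isUnit)
    ((isUnit_iff_isUnit_det _).1 hM.isUnit), map_re_ofReIm]
end

section
/- Let Y be an n×n complex matrix such that the real part Re[Y] is a symmetric real matrix and the imaginary part Im[Y] is a symmetric negative definite real matrix (i.e., −Im[Y] is positive definite). Then Y is invertible. -/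
open Matrix

/-- Dual of Lemma 1 (Section VI-C): if `Re[Y]` is symmetric and `Im[Y]` is symmetric
negative definite, then `Y` is invertible. -/
theorem complex_matrix_invertible_of_imNegDef {n : ℕ}
    (Y : Matrix (Fin n) (Fin n) ℂ)
    (hResym : (Y.map Complex.re) = (Y.map Complex.re)ᵀ)
    (hImsym : (Y.map Complex.im) = (Y.map Complex.im)ᵀ)
    (hImnd : ∀ x : Fin n → ℝ, x ≠ 0 → 0 < x ⬝ᵥ ((-(Y.map Complex.im)) *ᵥ x)) :
    IsUnit Y := by
  rw [Matrix.isUnit_iff_isUnit_det, isUnit_iff_ne_zero]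
  intro hdet
  obtain ⟨v, hv, hYv⟩ := (Matrix.exists_mulVec_eq_zero_iff).2 hdet
  set A := Y.map Complex.re with hA
  set B := Y.map Complex.im with hB
  set a : Fin n → ℝ := fun i => (v i).re with ha
  set b : Fin n → ℝ := fun i => (v i).im with hb
  -- real and imaginary parts of Y *ᵥ v = 0
  have hre : ∀ i, (A *ᵥ a) i - (B *ᵥ b) i = 0 := by
    intro i
    have h : ((Y *ᵥ v) i).re = 0 := by rw [hYv]; simp
    simpa [Matrix.mulVec, dotProduct, Complex.mul_re, Finset.sum_sub_distrib,
      hA, hB, ha, hb, Matrix.map_apply] using h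
  have him : ∀ i, (A *ᵥ b) i + (B *ᵥ a) i = 0 := by
    intro i
    have h : ((Y *ᵥ v) i).im = 0 := by rw [hYv]; simp
    simpa [Matrix.mulVec, dotProduct, Complex.mul_im, Finset.sum_add_distrib,
      hA, hB, ha, hb, Matrix.map_apply, add_comm] using h
  -- symmetry of A gives a ⬝ᵥ A *ᵥ b = b ⬝ᵥ A *ᵥ a
  have hsymA : a ⬝ᵥ (A *ᵥ b) = b ⬝ᵥ (A *ᵥ a) := by
    rw [Matrix.dotProduct_mulVec, ← Matrix.mulVec_transpose, ← hResym,
      dotProduct_comm]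
  -- key identity
  have hkey : a ⬝ᵥ (B *ᵥ a) + b ⬝ᵥ (B *ᵥ b) = 0 := by
    have h1 : a ⬝ᵥ (A *ᵥ b + B *ᵥ a) = 0 := by
      have : (A *ᵥ b + B *ᵥ a) = 0 := funext fun i => him i
      rw [this, dotProduct_zero]
    have h2 : b ⬝ᵥ (A *ᵥ a - B *ᵥ b) = 0 := by
      have : (A *ᵥ a - B *ᵥ b) = 0 := funext fun i => hre i
      rw [this, dotProduct_zero]
    have e1 : a ⬝ᵥ (A *ᵥ b) + a ⬝ᵥ (B *ᵥ a) = 0 := by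
      rwa [dotProduct_add] at h1
    have e2 : b ⬝ᵥ (A *ᵥ a) - b ⬝ᵥ (B *ᵥ b) = 0 := by
      rwa [dotProduct_sub] at h2
    rw [hsymA] at e1
    linarith
  -- negative definiteness: each term ≤ 0, and one is < 0
  have hterm : ∀ x : Fin n → ℝ, x ⬝ᵥ (B *ᵥ x) ≤ 0 := by
    intro x
    by_cases hx : x = 0
    · simp [hx]
    · have := hImnd x hx
      rw [Matrix.neg_mulVec, dotProduct_neg] at this
      linarith
  have hab : a ≠ 0 ∨ b ≠ 0 := by
    by_contra h
    push_neg at h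
    apply hv
    funext i
    have h1 := congrFun h.1 i
    have h2 := congrFun h.2 i
    simp only [ha, hb, Pi.zero_apply] at h1 h2
    exact Complex.ext h1 h2
  rcases hab with hx | hx
  · have h1 := hImnd a hx
    rw [Matrix.neg_mulVec, dotProduct_neg] at h1
    have h2 := hterm b
    linarith
  · have h1 := hImnd b hx
    rw [Matrix.neg_mulVec, dotProduct_neg] at h1
    have h2 := hterm a
    linarith
end

section
/- Let Y be an n×n complex matrix that is symmetric (Y = Yᵀ) and invertible with Re[Y⁻¹] symmetric positive definite. Let A be a real n×n matrix and let Z be a complex n×n diagonal matrix whose diagonal entries all have nonnegative real part. Then the matrix F = I + Y·Aᵀ·Z·A is invertible. -/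
open Matrix

lemma regF_key1 {n : ℕ} (B : Matrix (Fin n) (Fin n) ℂ) (hB : B = Bᵀ)
    (v : Fin n → ℂ) :
    (star v ⬝ᵥ (B *ᵥ v)).re =
      (fun j => (v j).re) ⬝ᵥ ((B.map Complex.re) *ᵥ fun j => (v j).re)
      + (fun j => (v j).im) ⬝ᵥ ((B.map Complex.re) *ᵥ fun j => (v j).im) := by
  have hBsym : ∀ j k, B j k = B k j := fun j k => congrFun (congrFun hB j) k
  have expand : ∀ j k : Fin n, ((star v j) * (B j k * v k)).re =
      ((v j).re * ((B j k).re * (v k).re) + (v j).im * ((B j k).re * (v k).im))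
      + ((v j).im * (B j k).im * (v k).re - (v j).re * (B j k).im * (v k).im) := by
    intro j k
    simp only [Pi.star_apply, Complex.mul_re, Complex.mul_im, Complex.star_def,
      Complex.conj_re, Complex.conj_im]
    ring
  have swap : ∑ j, ∑ k, (v j).im * (B j k).im * (v k).re
      = ∑ j, ∑ k, (v j).re * (B j k).im * (v k).im := by
    rw [Finset.sum_comm]
    refine Finset.sum_congr rfl fun j _ => Finset.sum_congr rfl fun k _ => ?_
    rw [hBsym k j]; ring
  simp only [dotProduct, mulVec, map_apply, Complex.re_sum, Finset.mul_sum, expand,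
    Finset.sum_add_distrib, Finset.sum_sub_distrib]
  linarith [swap]

lemma regF_key2 {n : ℕ} (A : Matrix (Fin n) (Fin n) ℝ) (Z : Matrix (Fin n) (Fin n) ℂ)
    (hZdiag : Z.IsDiag) (hZre : ∀ i, 0 ≤ (Z i i).re) (v : Fin n → ℂ) :
    0 ≤ (star v ⬝ᵥ (((A.map Complex.ofReal)ᵀ * Z * (A.map Complex.ofReal)) *ᵥ v)).re := by
  set Ac := A.map Complex.ofReal with hAc
  set w := Ac *ᵥ v with hw
  have h1 : (Acᵀ * Z * Ac) *ᵥ v = Acᵀ *ᵥ (Z *ᵥ w) := by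
    rw [hw, ← mulVec_mulVec, ← mulVec_mulVec]
  have h2 : star v ⬝ᵥ (Acᵀ *ᵥ (Z *ᵥ w)) = (Ac *ᵥ star v) ⬝ᵥ (Z *ᵥ w) := by
    rw [dotProduct_mulVec, vecMul_transpose]
  have h3 : Ac *ᵥ star v = star w := by
    funext i
    simp only [hw, mulVec, dotProduct, Pi.star_apply, star_sum, star_mul',
      hAc, map_apply, Complex.star_def, Complex.conj_ofReal]
  have h4 : Z *ᵥ w = fun i => Z i i * w i := by
    funext i
    simp only [mulVec, dotProduct]
    rw [Finset.sum_eq_single i]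
    · intro b _ hb
      rw [hZdiag (Ne.symm hb), zero_mul]
    · simp
  rw [h1, h2, h3, h4]
  simp only [dotProduct, Pi.star_apply, Complex.re_sum]
  refine Finset.sum_nonneg fun i _ => ?_
  have : star (w i) * (Z i i * w i) = Z i i * (Complex.normSq (w i) : ℂ) := by
    rw [show star (w i) * (Z i i * w i) = Z i i * (star (w i) * w i) by ring,
      Complex.star_def, ← Complex.normSq_eq_conj_mul_self]
  rw [this, Complex.mul_re]
  simp only [Complex.ofReal_re, Complex.ofReal_im, mul_zero, sub_zero]
  exact mul_nonneg (hZre i) (Complex.normSq_nonneg _)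

/-- Lemma 4 (invertibility part): `F = I + Y Aᵀ Z A` is invertible when `Y` is
complex symmetric and invertible with `Re[Y⁻¹]` symmetric positive definite, `A` is
real, and `Z` is diagonal with nonnegative real parts on the diagonal. -/
theorem regulator_F_invertible {n : ℕ}
    (Y : Matrix (Fin n) (Fin n) ℂ) (A : Matrix (Fin n) (Fin n) ℝ)
    (Z : Matrix (Fin n) (Fin n) ℂ)
    (hYsym : Y = Yᵀ) (hYunit : IsUnit Y)
    (hYinvSym : (Y⁻¹.map Complex.re) = (Y⁻¹.map Complex.re)ᵀ)
    (hYinvPD : ∀ x : Fin n → ℝ, x ≠ 0 → 0 < x ⬝ᵥ ((Y⁻¹.map Complex.re) *ᵥ x))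
    (hZdiag : Z.IsDiag) (hZre : ∀ i, 0 ≤ (Z i i).re) :
    IsUnit (1 + Y * (A.map Complex.ofReal)ᵀ * Z * (A.map Complex.ofReal)) := by
  set Ac := A.map Complex.ofReal with hAc
  set B := Y⁻¹ with hB
  set P := Acᵀ * Z * Ac with hP
  have hYdet : IsUnit Y.det := (Matrix.isUnit_iff_isUnit_det Y).mp hYunit
  have hBsym : B = Bᵀ := by
    rw [hB, Matrix.transpose_nonsing_inv, ← hYsym]
  -- positive semidefiniteness of Re[Y⁻¹]
  have hPSD : ∀ x : Fin n → ℝ, 0 ≤ x ⬝ᵥ ((B.map Complex.re) *ᵥ x) := by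
    intro x
    by_cases hx : x = 0
    · simp [hx]
    · exact le_of_lt (hYinvPD x hx)
  -- M := Y⁻¹ + Aᵀ Z A is invertible
  have hM : IsUnit (B + P) := by
    rw [Matrix.isUnit_iff_isUnit_det, isUnit_iff_ne_zero]
    intro hdet
    obtain ⟨v, hv, hMv⟩ := (Matrix.exists_mulVec_eq_zero_iff).mpr hdet
    have h0 : (star v ⬝ᵥ ((B + P) *ᵥ v)).re = 0 := by rw [hMv]; simp
    rw [add_mulVec, dotProduct_add, Complex.add_re] at h0
    have h2 : 0 ≤ (star v ⬝ᵥ (P *ᵥ v)).re := regF_key2 A Z hZdiag hZre v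
    have h1 : 0 < (star v ⬝ᵥ (B *ᵥ v)).re := by
      rw [regF_key1 B hBsym v]
      set u : Fin n → ℝ := fun j => (v j).re with hu
      set w : Fin n → ℝ := fun j => (v j).im with hw
      have huw : u ≠ 0 ∨ w ≠ 0 := by
        by_contra h
        push_neg at h
        apply hv
        funext j
        have h1 := congrFun h.1 j
        have h2 := congrFun h.2 j
        exact Complex.ext h1 h2
      rcases huw with h | h
      · exact add_pos_of_pos_of_nonneg (hYinvPD u h) (hPSD w)
      · exact add_pos_of_nonneg_of_pos (hPSD u) (hYinvPD w h)
    linarith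
  have hfact : 1 + Y * Acᵀ * Z * Ac = Y * (B + P) := by
    rw [Matrix.mul_add, hB, Matrix.mul_nonsing_inv Y hYdet, hP,
      ← Matrix.mul_assoc, ← Matrix.mul_assoc]
  rw [hfact]
  exact hYunit.mul hM
end

section
/- Let Y be an n×n complex matrix that is symmetric (Y = Yᵀ) and invertible with Re[Y⁻¹] symmetric positive definite. Let A be a real n×n matrix and let Z be a complex n×n diagonal matrix whose diagonal entries all have nonnegative real part. Then F = I + Y·Aᵀ·Z·A is invertible and the inverse transpose of F satisfies (Fᵀ)⁻¹ = I − Aᵀ·Z·A·F⁻¹·Y. -/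
open Matrix

/-- A complex symmetric matrix whose real part is positive definite is invertible. -/
lemma symm_re_pd_isUnit {n : ℕ} (M : Matrix (Fin n) (Fin n) ℂ)
    (hsym : Mᵀ = M)
    (hpd : ∀ x : Fin n → ℝ, x ≠ 0 → 0 < x ⬝ᵥ ((M.map Complex.re) *ᵥ x)) :
    IsUnit M := by
  rw [Matrix.isUnit_iff_isUnit_det, isUnit_iff_ne_zero]
  intro hdet
  obtain ⟨v, hv, hMv⟩ := (Matrix.exists_mulVec_eq_zero_iff).2 hdet
  set S : Matrix (Fin n) (Fin n) ℝ := M.map Complex.re with hS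
  set T : Matrix (Fin n) (Fin n) ℝ := M.map Complex.im with hT
  set a : Fin n → ℝ := fun i => (v i).re with ha
  set b : Fin n → ℝ := fun i => (v i).im with hb
  have hTsym : Tᵀ = T := by
    rw [hT, ← Matrix.transpose_map, hsym]
  have h1 : S *ᵥ a = T *ᵥ b := by
    funext i
    have h := congrArg Complex.re (congrFun hMv i)
    simpa [Matrix.mulVec, dotProduct, Complex.re_sum, Complex.mul_re, hS, hT, ha, hb,
      Matrix.map_apply, Finset.sum_sub_distrib, sub_eq_zero] using h
  have h2 : T *ᵥ a = -(S *ᵥ b) := by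
    funext i
    have h := congrArg Complex.im (congrFun hMv i)
    simp only [Matrix.mulVec, dotProduct, Complex.im_sum, Complex.mul_im,
      Pi.zero_apply, Complex.zero_im] at h
    simp only [Matrix.mulVec, dotProduct, Pi.neg_apply, hS, hT, ha, hb,
      Matrix.map_apply]
    have : ∑ j, ((M i j).re * (v j).im + (M i j).im * (v j).re) = 0 := h
    rw [Finset.sum_add_distrib] at this
    linarith
  have hcomm : a ⬝ᵥ (T *ᵥ b) = b ⬝ᵥ (T *ᵥ a) := by
    rw [Matrix.dotProduct_mulVec, dotProduct_comm]
    congr 1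
    conv_lhs => rw [← hTsym]
    exact Matrix.vecMul_transpose T a
  have hsum : a ⬝ᵥ (S *ᵥ a) + b ⬝ᵥ (S *ᵥ b) = 0 := by
    have e1 : a ⬝ᵥ (S *ᵥ a) = a ⬝ᵥ (T *ᵥ b) := by rw [h1]
    have e2 : b ⬝ᵥ (T *ᵥ a) = -(b ⬝ᵥ (S *ᵥ b)) := by
      rw [h2, dotProduct_neg]
    rw [e1, hcomm, e2]; ring
  have hab : a ≠ 0 ∨ b ≠ 0 := by
    by_contra h
    push_neg at h
    apply hv
    funext i
    have h1 := congrFun h.1 i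
    have h2 := congrFun h.2 i
    simp [ha, hb] at h1 h2
    exact Complex.ext h1 h2
  have qa : 0 ≤ a ⬝ᵥ (S *ᵥ a) := by
    rcases eq_or_ne a 0 with h | h
    · simp [h]
    · exact le_of_lt (hpd a h)
  have qb : 0 ≤ b ⬝ᵥ (S *ᵥ b) := by
    rcases eq_or_ne b 0 with h | h
    · simp [h]
    · exact le_of_lt (hpd b h)
  rcases hab with h | h
  · have := hpd a h; linarith
  · have := hpd b h; linarith

/-- Lemma 4, identity (38): `F = I + Y Aᵀ Z A` is invertible and
`(Fᵀ)⁻¹ = I − Aᵀ Z A F⁻¹ Y`. -/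
theorem regulator_F_inv_transpose {n : ℕ}
    (Y : Matrix (Fin n) (Fin n) ℂ) (A : Matrix (Fin n) (Fin n) ℝ)
    (Z : Matrix (Fin n) (Fin n) ℂ)
    (hYsym : Y = Yᵀ) (hYunit : IsUnit Y)
    (hYinvSym : (Y⁻¹.map Complex.re) = (Y⁻¹.map Complex.re)ᵀ)
    (hYinvPD : ∀ x : Fin n → ℝ, x ≠ 0 → 0 < x ⬝ᵥ ((Y⁻¹.map Complex.re) *ᵥ x))
    (hZdiag : Z.IsDiag) (hZre : ∀ i, 0 ≤ (Z i i).re)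
    (F : Matrix (Fin n) (Fin n) ℂ)
    (hF : F = 1 + Y * (A.map Complex.ofReal)ᵀ * Z * (A.map Complex.ofReal)) :
    IsUnit F ∧
      (Fᵀ)⁻¹ = 1 - (A.map Complex.ofReal)ᵀ * Z * (A.map Complex.ofReal) * F⁻¹ * Y := by
  set A' : Matrix (Fin n) (Fin n) ℂ := A.map Complex.ofReal with hA'
  set B : Matrix (Fin n) (Fin n) ℂ := A'ᵀ * Z * A' with hB
  have hZsym : Zᵀ = Z := hZdiag.isSymm
  have hBsym : Bᵀ = B := by
    rw [hB, Matrix.transpose_mul, Matrix.transpose_mul, Matrix.transpose_transpose, hZsym,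
      Matrix.mul_assoc]
  have hYdet : IsUnit Y.det := (Matrix.isUnit_iff_isUnit_det Y).1 hYunit
  have hYY : Y * Y⁻¹ = 1 := Matrix.mul_nonsing_inv Y hYdet
  -- the matrix M = Y⁻¹ + B
  set M : Matrix (Fin n) (Fin n) ℂ := Y⁻¹ + B with hM
  have hMsym : Mᵀ = M := by
    rw [hM, Matrix.transpose_add, hBsym, Matrix.transpose_nonsing_inv, ← hYsym]
  -- real part of B as a real matrix
  have hBre : B.map Complex.re = Aᵀ * (Z.map Complex.re) * A := by
    ext i j
    simp only [hB, hA', Matrix.map_apply, Matrix.mul_apply, Matrix.transpose_apply,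
      Finset.sum_mul, Complex.re_sum]
    congr 1; funext k
    simp [Complex.mul_re]
  have hZreDiag : (Z.map Complex.re).IsDiag := fun i j hij => by
    simp [Matrix.map_apply, hZdiag hij]
  have hBpsd : ∀ x : Fin n → ℝ, 0 ≤ x ⬝ᵥ ((B.map Complex.re) *ᵥ x) := by
    intro x
    rw [hBre, ← Matrix.mulVec_mulVec, ← Matrix.mulVec_mulVec,
      Matrix.dotProduct_mulVec x Aᵀ, Matrix.vecMul_transpose]
    set w : Fin n → ℝ := A *ᵥ x with hw
    have hdw : ∀ i, ((Z.map Complex.re) *ᵥ w) i = (Z i i).re * w i := by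
      intro i
      rw [Matrix.mulVec, dotProduct]
      rw [Finset.sum_eq_single i]
      · simp [Matrix.map_apply]
      · intro j _ hj
        simp [Matrix.map_apply, hZdiag (Ne.symm hj)]
      · simp
    rw [dotProduct]
    apply Finset.sum_nonneg
    intro i _
    rw [hdw i]
    have : w i * ((Z i i).re * w i) = (Z i i).re * (w i)^2 := by ring
    rw [this]
    exact mul_nonneg (hZre i) (sq_nonneg _)
  have hMpd : ∀ x : Fin n → ℝ, x ≠ 0 → 0 < x ⬝ᵥ ((M.map Complex.re) *ᵥ x) := by
    intro x hx
    have hmap : M.map Complex.re = Y⁻¹.map Complex.re + B.map Complex.re := by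
      ext i j; simp [hM, Matrix.map_apply]
    rw [hmap, Matrix.add_mulVec, dotProduct_add]
    have := hYinvPD x hx
    have := hBpsd x
    linarith
  have hMunit : IsUnit M := symm_re_pd_isUnit M hMsym hMpd
  have hFM : F = Y * M := by
    rw [hF, hM, Matrix.mul_add, hYY, Matrix.mul_assoc, Matrix.mul_assoc, hB,
      Matrix.mul_assoc]
  have hFunit : IsUnit F := by rw [hFM]; exact hYunit.mul hMunit
  have hFdet : IsUnit F.det := (Matrix.isUnit_iff_isUnit_det F).1 hFunit
  have hFF : F * F⁻¹ = 1 := Matrix.mul_nonsing_inv F hFdet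
  have hFB : F = 1 + Y * B := by
    rw [hF, hB, Matrix.mul_assoc, Matrix.mul_assoc, Matrix.mul_assoc]
  have hFt : Fᵀ = 1 + B * Y := by
    rw [hFB, Matrix.transpose_add, Matrix.transpose_one, Matrix.transpose_mul, hBsym, ← hYsym]
  refine ⟨hFunit, ?_⟩
  have key : Fᵀ * (1 - B * F⁻¹ * Y) = 1 := by
    rw [hFt]
    have expand : (1 + B * Y) * (1 - B * F⁻¹ * Y)
        = 1 + B * Y - B * ((1 + Y * B) * F⁻¹) * Y := by noncomm_ring
    rw [expand, ← hFB, hFF]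
    noncomm_ring
  have := Matrix.inv_eq_right_inv key
  rw [this, hB]
end

section
/- Let Y be an n×n complex matrix that is symmetric (Y = Yᵀ) and invertible with Re[Y⁻¹] symmetric positive definite. Let A be a real n×n matrix and let Z be a complex n×n diagonal matrix whose diagonal entries all have nonnegative real part. Then the matrix Y⁻¹ + Aᵀ·Z·A is invertible, F = I + Y·Aᵀ·Z·A is invertible with F⁻¹·Y = (Y⁻¹ + Aᵀ·Z·A)⁻¹, and in particular F⁻¹·Y is a symmetric complex matrix. -/
open Matrix

private lemma re_dot_real {n : ℕ} (M : Matrix (Fin n) (Fin n) ℂ) (x y : Fin n → ℝ) :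
    ((fun i => (x i : ℂ)) ⬝ᵥ M *ᵥ (fun i => (y i : ℂ))).re
      = x ⬝ᵥ ((M.map Complex.re) *ᵥ y) := by
  simp only [dotProduct, mulVec, Matrix.map_apply, Complex.re_sum, Finset.mul_sum]
  refine Finset.sum_congr rfl fun i _ => ?_
  refine Finset.sum_congr rfl fun j _ => ?_
  simp [Complex.mul_re, Complex.ofReal_re, Complex.ofReal_im]

private lemma star_mulVec_real {n : ℕ} (A : Matrix (Fin n) (Fin n) ℝ) (v : Fin n → ℂ) :
    (A.map Complex.ofReal) *ᵥ (star v) = star ((A.map Complex.ofReal) *ᵥ v) := by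
  funext i
  simp only [mulVec, dotProduct, Pi.star_apply, Matrix.map_apply]
  rw [show star (∑ j, (A i j : ℂ) * v j) = ∑ j, star ((A i j : ℂ) * v j) from map_sum (starRingEnd ℂ) _ _]
  refine Finset.sum_congr rfl fun j _ => ?_
  simp [RingHom.map_mul, Complex.conj_ofReal]

/-- Intermediate identities (34)–(35) of Lemma 4: `Y⁻¹ + Aᵀ Z A` is invertible,
`F = I + Y Aᵀ Z A` is invertible with `F⁻¹ Y = (Y⁻¹ + Aᵀ Z A)⁻¹`, and in particular
`F⁻¹ Y` is symmetric. -/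
theorem regulator_FinvY_symmetric {n : ℕ}
    (Y : Matrix (Fin n) (Fin n) ℂ) (A : Matrix (Fin n) (Fin n) ℝ)
    (Z : Matrix (Fin n) (Fin n) ℂ)
    (hYsym : Y = Yᵀ) (hYunit : IsUnit Y)
    (hYinvSym : (Y⁻¹.map Complex.re) = (Y⁻¹.map Complex.re)ᵀ)
    (hYinvPD : ∀ x : Fin n → ℝ, x ≠ 0 → 0 < x ⬝ᵥ ((Y⁻¹.map Complex.re) *ᵥ x))
    (hZdiag : Z.IsDiag) (hZre : ∀ i, 0 ≤ (Z i i).re)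
    (F : Matrix (Fin n) (Fin n) ℂ)
    (hF : F = 1 + Y * (A.map Complex.ofReal)ᵀ * Z * (A.map Complex.ofReal)) :
    IsUnit (Y⁻¹ + (A.map Complex.ofReal)ᵀ * Z * (A.map Complex.ofReal)) ∧
    IsUnit F ∧
    F⁻¹ * Y = (Y⁻¹ + (A.map Complex.ofReal)ᵀ * Z * (A.map Complex.ofReal))⁻¹ ∧
    F⁻¹ * Y = (F⁻¹ * Y)ᵀ := by
  set A' : Matrix (Fin n) (Fin n) ℂ := A.map Complex.ofReal with hA'
  set M : Matrix (Fin n) (Fin n) ℂ := Y⁻¹ + A'ᵀ * Z * A' with hM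
  have hYdet : IsUnit Y.det := (Matrix.isUnit_iff_isUnit_det Y).mp hYunit
  have hYinvsymC : (Y⁻¹)ᵀ = Y⁻¹ := by
    rw [Matrix.transpose_nonsing_inv, ← hYsym]
  have hZsym : Zᵀ = Z := hZdiag.isSymm
  have hMsym : Mᵀ = M := by
    rw [hM, Matrix.transpose_add, hYinvsymC]
    congr 1
    rw [Matrix.transpose_mul, Matrix.transpose_mul, Matrix.transpose_transpose, hZsym,
      Matrix.mul_assoc]
  -- nonnegativity of each semidefinite piece
  have hS_nonneg : ∀ x : Fin n → ℝ, 0 ≤ x ⬝ᵥ ((Y⁻¹.map Complex.re) *ᵥ x) := by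
    intro x
    by_cases hx : x = 0
    · simp [hx]
    · exact (hYinvPD x hx).le
  -- positivity of real part of quadratic form of M
  have hpos : ∀ v : Fin n → ℂ, v ≠ 0 → 0 < ((star v) ⬝ᵥ M *ᵥ v).re := by
    intro v hv
    have hsplit : (star v) ⬝ᵥ M *ᵥ v
        = (star v) ⬝ᵥ Y⁻¹ *ᵥ v + (star v) ⬝ᵥ (A'ᵀ * Z * A') *ᵥ v := by
      rw [hM, Matrix.add_mulVec, dotProduct_add]
    -- second part : star y ⬝ᵥ Z *ᵥ y with y = A' *ᵥ v
    set y : Fin n → ℂ := A' *ᵥ v with hy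
    have h2 : (star v) ⬝ᵥ (A'ᵀ * Z * A') *ᵥ v = (star y) ⬝ᵥ Z *ᵥ y := by
      rw [← Matrix.mulVec_mulVec, ← Matrix.mulVec_mulVec,
        Matrix.dotProduct_mulVec (star v) A'ᵀ, Matrix.vecMul_transpose,
        star_mulVec_real]
    have h2re : 0 ≤ ((star v) ⬝ᵥ (A'ᵀ * Z * A') *ᵥ v).re := by
      rw [h2]
      have hdiag : Z *ᵥ y = fun i => Z i i * y i := by
        funext i
        rw [mulVec, dotProduct]
        rw [Finset.sum_eq_single i]
        · intro b _ hb
          rw [hZdiag (Ne.symm hb), zero_mul]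
        · intro h; exact absurd (Finset.mem_univ i) h
      rw [hdiag]
      simp only [dotProduct, Pi.star_apply, Complex.re_sum]
      refine Finset.sum_nonneg fun i _ => ?_
      have : star (y i) * (Z i i * y i) = Z i i * (Complex.normSq (y i) : ℂ) := by
        rw [show star (y i) = (starRingEnd ℂ) (y i) from rfl]
        linear_combination Z i i * Complex.mul_conj (y i)
      rw [this]
      simp only [Complex.mul_re, Complex.ofReal_re, Complex.ofReal_im, mul_zero, sub_zero]
      exact mul_nonneg (hZre i) (Complex.normSq_nonneg _)
    -- first part
    set u : Fin n → ℝ := fun i => (v i).re with hu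
    set w : Fin n → ℝ := fun i => (v i).im with hw
    set uc : Fin n → ℂ := fun i => (u i : ℂ) with huc
    set wc : Fin n → ℂ := fun i => (w i : ℂ) with hwc
    have hvdecomp : v = uc + Complex.I • wc := by
      funext i
      simp only [Pi.add_apply, Pi.smul_apply, huc, hwc, hu, hw, smul_eq_mul]
      rw [mul_comm]
      exact (Complex.re_add_im (v i)).symm
    have hstarv : star v = uc - Complex.I • wc := by
      funext i
      simp only [Pi.star_apply, Pi.sub_apply, Pi.smul_apply, huc, hwc, hu, hw, smul_eq_mul]
      rw [mul_comm]
      exact Complex.ext (by simp) (by simp)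
    have hsymq : uc ⬝ᵥ Y⁻¹ *ᵥ wc = wc ⬝ᵥ Y⁻¹ *ᵥ uc := by
      calc uc ⬝ᵥ Y⁻¹ *ᵥ wc = (uc ᵥ* Y⁻¹) ⬝ᵥ wc := Matrix.dotProduct_mulVec _ _ _
        _ = wc ⬝ᵥ (uc ᵥ* Y⁻¹) := dotProduct_comm _ _
        _ = wc ⬝ᵥ ((Y⁻¹)ᵀ *ᵥ uc) := by
              rw [← Matrix.vecMul_transpose, Matrix.transpose_transpose]
        _ = wc ⬝ᵥ Y⁻¹ *ᵥ uc := by rw [hYinvsymC]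
    have h1 : (star v) ⬝ᵥ Y⁻¹ *ᵥ v = uc ⬝ᵥ Y⁻¹ *ᵥ uc + wc ⬝ᵥ Y⁻¹ *ᵥ wc := by
      rw [hstarv]
      nth_rewrite 1 [hvdecomp]
      rw [Matrix.mulVec_add, Matrix.mulVec_smul, sub_dotProduct,
        smul_dotProduct, dotProduct_add, dotProduct_add,
        dotProduct_smul, dotProduct_smul, hsymq]
      simp only [smul_eq_mul]
      linear_combination (-(wc ⬝ᵥ Y⁻¹ *ᵥ wc)) * Complex.I_mul_I
    have h1re : 0 < ((star v) ⬝ᵥ Y⁻¹ *ᵥ v).re := by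
      rw [h1, Complex.add_re, re_dot_real, re_dot_real]
      have huw : u ≠ 0 ∨ w ≠ 0 := by
        by_contra h
        push_neg at h
        apply hv
        funext i
        have h1 := congrFun h.1 i
        have h2 := congrFun h.2 i
        simp only [hu, hw, Pi.zero_apply] at h1 h2
        exact Complex.ext h1 h2
      rcases huw with h | h
      · exact add_pos_of_pos_of_nonneg (hYinvPD u h) (hS_nonneg w)
      · exact add_pos_of_nonneg_of_pos (hS_nonneg u) (hYinvPD w h)
    rw [hsplit, Complex.add_re]
    exact add_pos_of_pos_of_nonneg h1re h2re
  -- M is invertible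
  have hMdet : M.det ≠ 0 := by
    intro hdet
    obtain ⟨v, hv, hMv⟩ := (Matrix.exists_mulVec_eq_zero_iff).mpr hdet
    have := hpos v hv
    rw [hMv] at this
    simp at this
  have hMunit : IsUnit M := (Matrix.isUnit_iff_isUnit_det M).mpr (isUnit_iff_ne_zero.mpr hMdet)
  have hMdet' : IsUnit M.det := isUnit_iff_ne_zero.mpr hMdet
  -- F = Y * M
  have hFYM : F = Y * M := by
    rw [hF, hM, Matrix.mul_add, Matrix.mul_nonsing_inv Y hYdet, Matrix.mul_assoc,
      Matrix.mul_assoc, Matrix.mul_assoc]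
  have hFunit : IsUnit F := by
    rw [hFYM]
    exact hYunit.mul hMunit
  have hFinvY : F⁻¹ * Y = M⁻¹ := by
    rw [hFYM, Matrix.mul_inv_rev, Matrix.mul_assoc, Matrix.nonsing_inv_mul Y hYdet, Matrix.mul_one]
  refine ⟨hMunit, hFunit, hFinvY, ?_⟩
  rw [hFinvY, Matrix.transpose_nonsing_inv, hMsym]
end

section
/- Let Y and Y_L be n×n complex matrices, each symmetric (Y = Yᵀ and Y_L = Y_Lᵀ), with Re[Y] symmetric positive definite and Re[Y_L] positive semidefinite. Then Y + Y_L is invertible. -/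
open Matrix

/-- Theorem 6 (algebraic core): if `Y` and `Y_L` are complex symmetric with `Re[Y]`
symmetric positive definite and `Re[Y_L]` positive semidefinite, then `Y + Y_L` is
invertible. -/
theorem YplusYL_invertible {n : ℕ}
    (Y YL : Matrix (Fin n) (Fin n) ℂ)
    (hYsym : Y = Yᵀ) (hYLsym : YL = YLᵀ)
    (hYreSym : (Y.map Complex.re) = (Y.map Complex.re)ᵀ)
    (hYrePD : ∀ x : Fin n → ℝ, x ≠ 0 → 0 < x ⬝ᵥ ((Y.map Complex.re) *ᵥ x))
    (hYLrePSD : ∀ x : Fin n → ℝ, 0 ≤ x ⬝ᵥ ((YL.map Complex.re) *ᵥ x)) :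
    IsUnit (Y + YL) := by
  set M : Matrix (Fin n) (Fin n) ℂ := Y + YL with hM
  set S : Matrix (Fin n) (Fin n) ℝ := M.map Complex.re with hS
  set T : Matrix (Fin n) (Fin n) ℝ := M.map Complex.im with hT
  have hMsym : M = Mᵀ := by
    rw [hM, transpose_add, ← hYsym, ← hYLsym]
  have hTsym : T = Tᵀ := by
    rw [hT]
    conv_lhs => rw [hMsym]
    ext i j
    simp [transpose_apply]
  -- S is positive definite
  have hSPD : ∀ x : Fin n → ℝ, x ≠ 0 → 0 < x ⬝ᵥ (S *ᵥ x) := by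
    intro x hx
    have hSplit : S = Y.map Complex.re + YL.map Complex.re := by
      ext i j; simp [hS, hM]
    rw [hSplit, add_mulVec, dotProduct_add]
    have := hYrePD x hx
    have := hYLrePSD x
    linarith
  have hSPSD : ∀ x : Fin n → ℝ, 0 ≤ x ⬝ᵥ (S *ᵥ x) := by
    intro x
    by_cases hx : x = 0
    · simp [hx]
    · exact (hSPD x hx).le
  have hSzero : ∀ x : Fin n → ℝ, x ⬝ᵥ (S *ᵥ x) = 0 → x = 0 := by
    intro x hx
    by_contra h
    exact absurd hx (ne_of_gt (hSPD x h))
  rw [Matrix.isUnit_iff_isUnit_det, isUnit_iff_ne_zero]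
  intro hdet
  obtain ⟨v, hv, hvker⟩ := (Matrix.exists_mulVec_eq_zero_iff.2 hdet)
  set a : Fin n → ℝ := fun i => (v i).re with ha
  set b : Fin n → ℝ := fun i => (v i).im with hb
  -- real and imaginary parts of the kernel equation
  have hre : S *ᵥ a - T *ᵥ b = 0 := by
    funext i
    have h0 : (M *ᵥ v) i = 0 := by rw [hvker]; rfl
    have h1 : ((M *ᵥ v) i).re = 0 := by rw [h0]; simp
    have : (∑ j, M i j * v j).re = 0 := h1
    rw [Complex.re_sum] at this
    simp only [Complex.mul_re] at this
    simpa [mulVec, dotProduct, Finset.sum_sub_distrib, hS, hT, ha, hb, sub_eq_zero]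
      using this
  have him : S *ᵥ b + T *ᵥ a = 0 := by
    funext i
    have h0 : (M *ᵥ v) i = 0 := by rw [hvker]; rfl
    have h1 : ((M *ᵥ v) i).im = 0 := by rw [h0]; simp
    have : (∑ j, M i j * v j).im = 0 := h1
    rw [Complex.im_sum] at this
    simp only [Complex.mul_im] at this
    simpa [mulVec, dotProduct, Finset.sum_add_distrib, hS, hT, ha, hb, add_comm]
      using this
  have h1 : a ⬝ᵥ (S *ᵥ a) = a ⬝ᵥ (T *ᵥ b) := by
    have := congrArg (fun w => a ⬝ᵥ w) hre
    simpa [dotProduct_sub, sub_eq_zero] using this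
  have h2 : b ⬝ᵥ (S *ᵥ b) = - (b ⬝ᵥ (T *ᵥ a)) := by
    have := congrArg (fun w => b ⬝ᵥ w) him
    simp only [dotProduct_add, dotProduct_zero] at this
    linarith
  have hTsymm : b ⬝ᵥ (T *ᵥ a) = a ⬝ᵥ (T *ᵥ b) := by
    rw [dotProduct_mulVec, ← mulVec_transpose, ← hTsym, dotProduct_comm]
  have hsum : a ⬝ᵥ (S *ᵥ a) + b ⬝ᵥ (S *ᵥ b) = 0 := by
    rw [h1, h2, hTsymm]; ring
  have ha0 : a = 0 := hSzero a (by
    have := hSPSD a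
    have := hSPSD b
    linarith)
  have hb0 : b = 0 := hSzero b (by
    have := hSPSD a
    have := hSPSD b
    linarith)
  apply hv
  funext i
  have : (v i).re = 0 := congrFun ha0 i
  have : (v i).im = 0 := congrFun hb0 i
  exact Complex.ext (congrFun ha0 i) (congrFun hb0 i)
end

section
/- Let y_t ∈ ℂ with Re[y_t] > 0 and consider the real symmetric 6×6 block matrix G_{YgΔ} = [[Re[Y1], Re[Y3]], [Re[Y3]ᵀ, Re[Y2]]], where Y1 = y_t·I₃, Y2 = (y_t/3)·[[2,−1,−1],[−1,2,−1],[−1,−1,2]], and Y3 = (y_t/√3)·[[−1,1,0],[0,−1,1],[1,0,−1]]. Then G_{YgΔ} is positive semidefinite and its set of eigenvalues equals {0, Re[y_t], 2·Re[y_t]}. -/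
/-!
With `r = Re y_t`, the block matrix is `r • N Nᵀ` for the `6 × 3` matrix `N = [I; Aᵀ/√3]`,
where `A` is the delta incidence pattern of `Y3`; this Gram form makes it positive semidefinite.
Since `A Aᵀ = L` is the Laplacian of the triangle and `L² = 3L`, the small Gram matrix
`NᵀN = I + L/3` satisfies `(NᵀN - 1)(NᵀN - 2) = 0`, hence
`N Nᵀ (N Nᵀ - 1)(N Nᵀ - 2) = N (NᵀN - 1)(NᵀN - 2) Nᵀ = 0` and the spectrum lies in `{0, 1, 2}`.
Explicit eigenvectors show that all three values occur.
-/

open Matrix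

theorem spectrum_subset_of_mul_sub_mul_sub_eq_zero {𝕜 A : Type*} [Field 𝕜] [Ring A]
    [Algebra 𝕜 A] [Nontrivial A] {a : A} {r s : 𝕜}
    (h : a * (a - algebraMap 𝕜 A r) * (a - algebraMap 𝕜 A s) = 0) :
    spectrum 𝕜 a ⊆ {0, r, s} := by
  intro μ hμ
  have hroot :=
    spectrum.subset_polynomial_aeval a (.X * (.X - .C r) * (.X - .C s)) ⟨μ, hμ, rfl⟩
  simp only [map_mul, map_sub, Polynomial.aeval_X, Polynomial.aeval_C, h, spectrum.zero_eq,
    Set.mem_singleton_iff, Polynomial.eval_mul, Polynomial.eval_sub, Polynomial.eval_X,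
    Polynomial.eval_C, mul_eq_zero, sub_eq_zero] at hroot
  simp only [Set.mem_insert_iff, Set.mem_singleton_iff]
  tauto

namespace Matrix

variable {m n R : Type*} [Fintype m] [Fintype n] [CommRing R]

theorem mem_spectrum_of_mulVec_eq_smul [DecidableEq n] {M : Matrix n n R} {v : n → R}
    {μ : R} (hv : v ≠ 0) (h : M *ᵥ v = μ • v) : μ ∈ spectrum R M := by
  rw [← spectrum_toLin']
  exact (Module.End.hasEigenvalue_of_hasEigenvector
    ⟨Module.End.mem_eigenspace_iff.2 (by rwa [toLin'_apply]), hv⟩).mem_spectrum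

theorem mem_spectrum_mul_of_mulVec_mul_eq_smul [DecidableEq m] {N : Matrix m n R}
    {K : Matrix n m R} {w : n → R} {μ : R} (hNw : N *ᵥ w ≠ 0) (h : (K * N) *ᵥ w = μ • w) :
    μ ∈ spectrum R (N * K) :=
  mem_spectrum_of_mulVec_eq_smul hNw <| by
    rw [mulVec_mulVec, Matrix.mul_assoc, ← mulVec_mulVec, h, mulVec_smul]

theorem mul_mul_sub_smul_mul_sub_smul [DecidableEq m] [DecidableEq n] (N : Matrix m n R)
    (K : Matrix n m R) (a b : R) :
    N * K * (N * K - a • 1) * (N * K - b • 1) =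
      N * ((K * N - a • 1) * (K * N - b • 1)) * K := by
  have intertwine (c : R) : K * (N * K - c • 1) = (K * N - c • 1) * K := by
    simp only [Matrix.mul_sub, Matrix.sub_mul, Matrix.mul_smul, Matrix.smul_mul, Matrix.mul_one,
      Matrix.one_mul, Matrix.mul_assoc]
  simp only [Matrix.mul_assoc, intertwine]

end Matrix

def deltaIncidence : Matrix (Fin 3) (Fin 3) ℝ := !![-1, 1, 0; 0, -1, 1; 1, 0, -1]

def triangleLaplacian : Matrix (Fin 3) (Fin 3) ℝ := !![2, -1, -1; -1, 2, -1; -1, -1, 2]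

noncomputable def ygDeltaFactor : Matrix (Fin 3 ⊕ Fin 3) (Fin 3) ℝ :=
  fromRows 1 ((√3)⁻¹ • deltaIncidenceᵀ)

theorem deltaIncidence_mul_transpose : deltaIncidence * deltaIncidenceᵀ = triangleLaplacian := by
  ext i j
  fin_cases i <;> fin_cases j <;>
    norm_num [deltaIncidence, triangleLaplacian, mul_apply, Fin.sum_univ_three, cons_val_two,
      vecHead, vecTail]

theorem deltaIncidence_mulVec_one : deltaIncidence *ᵥ ![1, 1, 1] = 0 := by
  ext i
  fin_cases i <;>
    norm_num [deltaIncidence, mulVec, dotProduct, Fin.sum_univ_three, cons_val_two, vecHead,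
      vecTail]

theorem triangleLaplacian_mulVec_one : triangleLaplacian *ᵥ ![1, 1, 1] = 0 := by
  ext i
  fin_cases i <;>
    norm_num [triangleLaplacian, mulVec, dotProduct, Fin.sum_univ_three, cons_val_two, vecHead,
      vecTail]

theorem triangleLaplacian_mulVec_one_neg_one_zero :
    triangleLaplacian *ᵥ ![1, -1, 0] = (3 : ℝ) • ![1, -1, 0] := by
  ext i
  fin_cases i <;>
    norm_num [triangleLaplacian, mulVec, dotProduct, Fin.sum_univ_three, cons_val_two, vecHead,
      vecTail]

theorem triangleLaplacian_mul_self :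
    triangleLaplacian * triangleLaplacian = (3 : ℝ) • triangleLaplacian := by
  ext i j
  fin_cases i <;> fin_cases j <;>
    norm_num [triangleLaplacian, mul_apply, Fin.sum_univ_three, cons_val_two, vecHead, vecTail]

theorem ygDeltaFactor_transpose_mul_self :
    ygDeltaFactorᵀ * ygDeltaFactor = 1 + (3 : ℝ)⁻¹ • triangleLaplacian := by
  rw [ygDeltaFactor, transpose_fromRows, fromCols_mul_fromRows, transpose_one, Matrix.one_mul,
    transpose_smul, transpose_transpose, smul_mul_smul_comm, ← mul_inv,
    Real.mul_self_sqrt (by norm_num), deltaIncidence_mul_transpose]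

theorem ygDeltaFactor_transpose_mul_self_sub_mul_sub_eq_zero :
    (ygDeltaFactorᵀ * ygDeltaFactor - (1 : ℝ) • 1) *
      (ygDeltaFactorᵀ * ygDeltaFactor - (2 : ℝ) • 1) = 0 := by
  rw [ygDeltaFactor_transpose_mul_self]
  simp only [Matrix.mul_add, Matrix.add_mul, Matrix.mul_sub, Matrix.sub_mul, Matrix.mul_one,
    Matrix.one_mul, Matrix.mul_smul, Matrix.smul_mul, triangleLaplacian_mul_self]
  module

theorem spectrum_ygDeltaFactor_mul_transpose :
    spectrum ℝ (ygDeltaFactor * ygDeltaFactorᵀ) = {0, 1, 2} := by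
  refine subset_antisymm (spectrum_subset_of_mul_sub_mul_sub_eq_zero ?_) ?_
  · simp only [Algebra.algebraMap_eq_smul_one]
    rw [mul_mul_sub_smul_mul_sub_smul, ygDeltaFactor_transpose_mul_self_sub_mul_sub_eq_zero,
      Matrix.mul_zero, Matrix.zero_mul]
  have hfactor_ne_zero {w : Fin 3 → ℝ} (hw : w ≠ 0) : ygDeltaFactor *ᵥ w ≠ 0 := fun h0 =>
    hw (by simpa [ygDeltaFactor, fromRows_mulVec] using congrArg (fun v => v ∘ Sum.inl) h0)
  rintro μ (rfl | rfl | rfl)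
  · refine mem_spectrum_of_mulVec_eq_smul (v := Sum.elim 0 ![1, 1, 1]) ?_ ?_
    · exact fun h0 => by simpa using congrFun h0 (Sum.inr 0)
    · rw [zero_smul, ← mulVec_mulVec, ygDeltaFactor, transpose_fromRows,
        fromCols_mulVec_sumElim, transpose_smul, transpose_transpose, smul_mulVec,
        deltaIncidence_mulVec_one]
      simp
  · refine mem_spectrum_mul_of_mulVec_mul_eq_smul (w := ![1, 1, 1]) (hfactor_ne_zero ?_) ?_
    · exact fun h0 => by simpa using congrFun h0 0
    · rw [ygDeltaFactor_transpose_mul_self, add_mulVec, smul_mulVec, triangleLaplacian_mulVec_one]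
      simp
  · refine mem_spectrum_mul_of_mulVec_mul_eq_smul (w := ![1, -1, 0]) (hfactor_ne_zero ?_) ?_
    · exact fun h0 => by simpa using congrFun h0 0
    · rw [ygDeltaFactor_transpose_mul_self, add_mulVec, smul_mulVec,
        triangleLaplacian_mulVec_one_neg_one_zero, one_mulVec]
      module

/-- Eigenvalue claim in the proof of Theorem 2 for the wye-grounded--delta block
`G_{YgΔ} = [[Re Y1, Re Y3], [Re Y3ᵀ, Re Y2]]`: it is positive semidefinite with
eigenvalues `{0, Re[y_t], 2 Re[y_t]}`. -/
theorem G_YgDelta_psd_spectrum (yt : ℂ) (h : 0 < yt.re)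
    (Y1 Y2 Y3 : Matrix (Fin 3) (Fin 3) ℂ)
    (hY1 : Y1 = yt • (1 : Matrix (Fin 3) (Fin 3) ℂ))
    (hY2 : Y2 = (yt / 3) • !![(2 : ℂ), -1, -1; -1, 2, -1; -1, -1, 2])
    (hY3 : Y3 = (yt / (Real.sqrt 3 : ℂ)) • !![(-1 : ℂ), 1, 0; 0, -1, 1; 1, 0, -1])
    (G : Matrix (Fin 3 ⊕ Fin 3) (Fin 3 ⊕ Fin 3) ℝ)
    (hG : G = Matrix.fromBlocks (Y1.map Complex.re) (Y3.map Complex.re)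
      ((Y3.map Complex.re)ᵀ) (Y2.map Complex.re)) :
    (∀ x : Fin 3 ⊕ Fin 3 → ℝ, 0 ≤ x ⬝ᵥ (G *ᵥ x)) ∧
      spectrum ℝ G = {0, yt.re, 2 * yt.re} := by
  have hgram : G = yt.re • (ygDeltaFactor * ygDeltaFactorᵀ) := by
    have hs : (√3 : ℝ) * √3 = 3 := Real.mul_self_sqrt (by norm_num)
    subst hG hY1 hY2 hY3
    ext (i | i) (j | j) <;> fin_cases i <;> fin_cases j <;>
      simp [ygDeltaFactor, deltaIncidence, mul_apply, Fin.sum_univ_three, Complex.div_re,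
        Complex.normSq_apply, one_apply] <;> field_simp <;> norm_num [hs]
  subst hgram
  refine ⟨fun x => ?_, ?_⟩
  · simpa using
      ((posSemidef_self_mul_conjTranspose ygDeltaFactor).smul h.le).dotProduct_mulVec_nonneg x
  · rw [show yt.re • _ = Units.mk0 yt.re h.ne' • _ from rfl, spectrum.unit_smul_eq_smul,
      spectrum_ygDeltaFactor_mul_transpose]
    simp [Units.smul_def, Set.smul_set_insert, mul_comm]
end

section
/- Let y_t ∈ ℂ with Re[y_t] > 0 and consider the real symmetric 6×6 block matrix G_{YΔ} = [[Re[Y2], Re[Y3]], [Re[Y3]ᵀ, Re[Y2]]], where Y2 = (y_t/3)·[[2,−1,−1],[−1,2,−1],[−1,−1,2]] and Y3 = (y_t/√3)·[[−1,1,0],[0,−1,1],[1,0,−1]]. Then G_{YΔ} is positive semidefinite and its set of eigenvalues equals {0, 2·Re[y_t]}. -/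
open Matrix

/-!
Write `a = Re y_t`. Up to the factor `a / 3`, `G_{YΔ}` is the block matrix built from the
Laplacian `P` of the triangle and `√3 Q` with `Q = C - 1`, `C` the cyclic shift. The relations
`P² = 3P`, `PQ = QP = 3Q`, `QQᵀ = QᵀQ = P` give `G² = 2a G`. A symmetric real matrix with
`G² = c G`, `c > 0`, satisfies `c xᵀGx = |Gx|² ≥ 0`. Its spectrum lies in `{0, c}` because
`X (X - c)` kills `G`, and is all of `{0, c}` when `G ≠ 0` and `G ≠ c I`: then both factors of
`G (G - c) = 0` are nonzero, so neither is invertible.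
-/

section MulSelfEqSmul

variable {K A : Type*} [Field K] [Ring A] [Algebra K A] {a : A} {c : K}

open Polynomial in
theorem spectrum_subset_of_mul_self_eq_smul (h : a * a = c • a) : spectrum K a ⊆ {0, c} := by
  nontriviality A
  refine Set.image_subset_iff.mp (spectrum.subset_polynomial_aeval a (X * (X - C c))) |>.trans ?_
  intro μ hμ
  have hzero : aeval a (X * (X - C c)) = 0 := by
    simp [mul_sub, h, Algebra.algebraMap_eq_smul_one]
  simpa [hzero, spectrum.zero_eq, sub_eq_zero] using hμ

theorem mem_spectrum_of_mul_self_eq_smul (h : a * a = c • a) (ha : a ≠ 0) : c ∈ spectrum K a := by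
  rw [spectrum.mem_iff]
  intro hu
  refine ha (hu.mul_right_eq_zero.mp ?_)
  rw [sub_mul, h, Algebra.algebraMap_eq_smul_one, smul_one_mul, sub_self]

theorem zero_mem_spectrum_of_mul_self_eq_smul (h : a * a = c • a) (ha : a ≠ algebraMap K A c) :
    0 ∈ spectrum K a := by
  rw [spectrum.zero_mem_iff]
  intro hu
  refine sub_ne_zero.mpr ha (hu.mul_right_eq_zero.mp ?_)
  rw [mul_sub, h, Algebra.algebraMap_eq_smul_one, mul_smul_one, sub_self]

theorem spectrum_eq_of_mul_self_eq_smul (h : a * a = c • a) (ha₀ : a ≠ 0)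
    (ha : a ≠ algebraMap K A c) : spectrum K a = {0, c} :=
  (spectrum_subset_of_mul_self_eq_smul h).antisymm <| Set.insert_subset
    (zero_mem_spectrum_of_mul_self_eq_smul h ha)
    (Set.singleton_subset_iff.mpr (mem_spectrum_of_mul_self_eq_smul h ha₀))

end MulSelfEqSmul

namespace Matrix

theorem dotProduct_mulVec_nonneg_of_mul_self_eq_smul {R n : Type*} [CommRing R] [LinearOrder R]
    [IsStrictOrderedRing R] [Fintype n] {G : Matrix n n R} {c : R} (hc : 0 < c) (hG : Gᵀ = G)
    (h : G * G = c • G) (x : n → R) : 0 ≤ x ⬝ᵥ (G *ᵥ x) := by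
  have key : c * (x ⬝ᵥ (G *ᵥ x)) = (G *ᵥ x) ⬝ᵥ (G *ᵥ x) :=
    calc c * (x ⬝ᵥ (G *ᵥ x)) = x ⬝ᵥ ((G * G) *ᵥ x) := by
          rw [h, smul_mulVec, dotProduct_smul, smul_eq_mul]
      _ = (x ᵥ* G) ⬝ᵥ (G *ᵥ x) := by rw [← mulVec_mulVec, dotProduct_mulVec]
      _ = (G *ᵥ x) ⬝ᵥ (G *ᵥ x) := by rw [← mulVec_transpose, hG]
  exact nonneg_of_mul_nonneg_right (key ▸ Finset.sum_nonneg fun i _ ↦ mul_self_nonneg _) hc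

theorem fromBlocks_mul_self_eq_smul {R m : Type*} [CommRing R] [Fintype m]
    {P Q : Matrix m m R} {k s : R} (hP : Pᵀ = P) (hPP : P * P = k • P) (hPQ : P * Q = k • Q)
    (hQP : Q * P = k • Q) (hQQt : Q * Qᵀ = P) (hQtQ : Qᵀ * Q = P) (hs : s * s = k) :
    fromBlocks P (s • Q) (s • Qᵀ) P * fromBlocks P (s • Q) (s • Qᵀ) P =
      (2 * k) • fromBlocks P (s • Q) (s • Qᵀ) P := by
  have hQtP : Qᵀ * P = k • Qᵀ := by rw [← hP, ← transpose_mul, hPQ, transpose_smul]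
  have hPQt : P * Qᵀ = k • Qᵀ := by rw [← hP, ← transpose_mul, hQP, transpose_smul]
  simp only [fromBlocks_multiply, fromBlocks_smul, Matrix.smul_mul, Matrix.mul_smul, smul_smul,
    hPP, hPQ, hQP, hQQt, hQtQ, hQtP, hPQt, hs, ← add_smul]
  congr 2 <;> ring

theorem map_re_smul_map_ofReal {m n : Type*} (z : ℂ) (M : Matrix m n ℝ) :
    (z • M.map ((↑) : ℝ → ℂ)).map Complex.re = z.re • M := by
  ext i j; simp

end Matrix

def wyeMatrix : Matrix (Fin 3) (Fin 3) ℝ := !![2, -1, -1; -1, 2, -1; -1, -1, 2]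

def deltaMatrix : Matrix (Fin 3) (Fin 3) ℝ := !![-1, 1, 0; 0, -1, 1; 1, 0, -1]

theorem wyeMatrix_transpose : wyeMatrixᵀ = wyeMatrix := by
  ext i j; fin_cases i <;> fin_cases j <;> rfl

theorem wyeMatrix_mul_self : wyeMatrix * wyeMatrix = (3 : ℝ) • wyeMatrix := by
  ext i j; fin_cases i <;> fin_cases j <;> norm_num [wyeMatrix, mul_apply, Fin.sum_univ_succ]

theorem wyeMatrix_mul_deltaMatrix : wyeMatrix * deltaMatrix = (3 : ℝ) • deltaMatrix := by
  ext i j; fin_cases i <;> fin_cases j <;>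
    norm_num [wyeMatrix, deltaMatrix, mul_apply, Fin.sum_univ_succ]

theorem deltaMatrix_mul_wyeMatrix : deltaMatrix * wyeMatrix = (3 : ℝ) • deltaMatrix := by
  ext i j; fin_cases i <;> fin_cases j <;>
    norm_num [wyeMatrix, deltaMatrix, mul_apply, Fin.sum_univ_succ]

theorem deltaMatrix_mul_transpose : deltaMatrix * deltaMatrixᵀ = wyeMatrix := by
  ext i j; fin_cases i <;> fin_cases j <;>
    norm_num [wyeMatrix, deltaMatrix, mul_apply, Fin.sum_univ_succ]

theorem deltaMatrix_transpose_mul : deltaMatrixᵀ * deltaMatrix = wyeMatrix := by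
  ext i j; fin_cases i <;> fin_cases j <;>
    norm_num [wyeMatrix, deltaMatrix, mul_apply, Fin.sum_univ_succ]

theorem wyeMatrix_map_ofReal :
    wyeMatrix.map ((↑) : ℝ → ℂ) = !![(2 : ℂ), -1, -1; -1, 2, -1; -1, -1, 2] := by
  ext i j; fin_cases i <;> fin_cases j <;> simp [wyeMatrix]

theorem deltaMatrix_map_ofReal :
    deltaMatrix.map ((↑) : ℝ → ℂ) = !![(-1 : ℂ), 1, 0; 0, -1, 1; 1, 0, -1] := by
  ext i j; fin_cases i <;> fin_cases j <;> simp [deltaMatrix]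

noncomputable def wyeDeltaBlock : Matrix (Fin 3 ⊕ Fin 3) (Fin 3 ⊕ Fin 3) ℝ :=
  fromBlocks wyeMatrix (√3 • deltaMatrix) (√3 • deltaMatrixᵀ) wyeMatrix

theorem wyeDeltaBlock_transpose : wyeDeltaBlockᵀ = wyeDeltaBlock := by
  rw [wyeDeltaBlock, fromBlocks_transpose, wyeMatrix_transpose, transpose_smul,
    transpose_smul, transpose_transpose]

theorem wyeDeltaBlock_mul_self : wyeDeltaBlock * wyeDeltaBlock = (6 : ℝ) • wyeDeltaBlock := by
  have h := fromBlocks_mul_self_eq_smul wyeMatrix_transpose wyeMatrix_mul_self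
    wyeMatrix_mul_deltaMatrix deltaMatrix_mul_wyeMatrix deltaMatrix_mul_transpose
    deltaMatrix_transpose_mul (Real.mul_self_sqrt zero_le_three)
  rwa [show (2 * 3 : ℝ) = 6 by norm_num] at h

theorem wyeDeltaBlock_inl_zero_inl_one : wyeDeltaBlock (.inl 0) (.inl 1) = -1 := rfl

/-- Eigenvalue claim in the proof of Theorem 2 for the wye--delta block
`G_{YΔ} = [[Re Y2, Re Y3], [Re Y3ᵀ, Re Y2]]`: it is positive semidefinite with
eigenvalues `{0, 2 Re[y_t]}`. -/
theorem G_YDelta_psd_spectrum (yt : ℂ) (h : 0 < yt.re)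
    (Y2 Y3 : Matrix (Fin 3) (Fin 3) ℂ)
    (hY2 : Y2 = (yt / 3) • !![(2 : ℂ), -1, -1; -1, 2, -1; -1, -1, 2])
    (hY3 : Y3 = (yt / (Real.sqrt 3 : ℂ)) • !![(-1 : ℂ), 1, 0; 0, -1, 1; 1, 0, -1])
    (G : Matrix (Fin 3 ⊕ Fin 3) (Fin 3 ⊕ Fin 3) ℝ)
    (hG : G = Matrix.fromBlocks (Y2.map Complex.re) (Y3.map Complex.re)
      ((Y3.map Complex.re)ᵀ) (Y2.map Complex.re)) :
    (∀ x : Fin 3 ⊕ Fin 3 → ℝ, 0 ≤ x ⬝ᵥ (G *ᵥ x)) ∧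
      spectrum ℝ G = {0, 2 * yt.re} := by
  have hY2re : Y2.map Complex.re = (yt.re / 3) • wyeMatrix := by
    rw [hY2, ← wyeMatrix_map_ofReal, map_re_smul_map_ofReal, Complex.div_ofNat_re]
  have hY3re : Y3.map Complex.re = (yt.re / 3) • (√3 • deltaMatrix) := by
    rw [hY3, ← deltaMatrix_map_ofReal, map_re_smul_map_ofReal, Complex.div_ofReal_re, smul_smul]
    congr 1
    field_simp
    rw [Real.sq_sqrt zero_le_three]
  have hGblock : G = (yt.re / 3) • wyeDeltaBlock := by
    rw [hG, hY2re, hY3re, transpose_smul, transpose_smul, wyeDeltaBlock, fromBlocks_smul]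
  have hGG : G * G = (2 * yt.re) • G := by
    rw [hGblock, smul_mul_smul_comm, wyeDeltaBlock_mul_self, smul_smul, smul_smul]
    congr 1
    ring
  have hGt : Gᵀ = G := by rw [hGblock, transpose_smul, wyeDeltaBlock_transpose]
  have hentry : G (.inl 0) (.inl 1) ≠ 0 := by
    rw [hGblock, Matrix.smul_apply, wyeDeltaBlock_inl_zero_inl_one]
    simp [h.ne']
  refine ⟨dotProduct_mulVec_nonneg_of_mul_self_eq_smul (by positivity) hGt hGG,
    spectrum_eq_of_mul_self_eq_smul hGG ?_ ?_⟩
  · rintro rfl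
    exact hentry rfl
  · intro hscalar
    exact hentry (by rw [hscalar, algebraMap_matrix_apply, if_neg (by simp)])
end

section
/- Let y_t ∈ ℂ with Re[y_t] > 0 and let ε > 0 be a real number. Consider the real symmetric 5×5 block matrix G_{OYΔ} = [[Re[Y5], Re[Y6]], [Re[Y6]ᵀ, Re[Y4] + ε·I₃]], where Y4 = (y_t/3)·[[1,−1,0],[−1,2,−1],[0,−1,1]], Y5 = y_t·I₂, and Y6 = (y_t/√3)·[[−1,1,0],[0,−1,1]]. Then G_{OYΔ} is positive definite. -/
/-!
With `r = Re[y_t]` and `C = (1/√3)·[[-1,1,0],[0,-1,1]]` one has `Re Y5 = r I`, `Re Y6 = r C` and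
`Re Y4 = r CᵀC`, so completing the square factors the block matrix as
`G = Lᵀ · diag(r I, ε I) · L` with the unitriangular `L = [[I, C], [0, I]]`.
Positive definiteness is invariant under congruence by an invertible matrix.
-/

open Matrix

section BlockFactorization

variable {m n R : Type*} [Fintype m] [Fintype n] [DecidableEq m] [DecidableEq n]
  [CommRing R] [StarRing R]

theorem fromBlocks_eq_conjTranspose_mul_diagonal_mul (C : Matrix m n R) (r ε : R) :
    fromBlocks (r • 1) (r • C) (r • Cᴴ) (r • (Cᴴ * C) + ε • 1) =
      (fromBlocks 1 C 0 1)ᴴ * diagonal (Sum.elim (fun _ ↦ r) fun _ ↦ ε) * fromBlocks 1 C 0 1 := by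
  rw [← fromBlocks_diagonal, fromBlocks_conjTranspose, fromBlocks_multiply, fromBlocks_multiply]
  simp only [← smul_one_eq_diagonal]
  simp [Matrix.mul_smul, Matrix.smul_mul, add_comm]

variable [PartialOrder R] [StarOrderedRing R] [NoZeroDivisors R]

theorem posDef_fromBlocks_smul_one (C : Matrix m n R) {r ε : R} (hr : 0 < r) (hε : 0 < ε) :
    (fromBlocks (r • 1) (r • C) (r • Cᴴ) (r • (Cᴴ * C) + ε • 1)).PosDef := by
  have hL : IsUnit (fromBlocks 1 C 0 1 : Matrix (m ⊕ n) (m ⊕ n) R) := by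
    simp [isUnit_iff_isUnit_det]
  rw [fromBlocks_eq_conjTranspose_mul_diagonal_mul, ← star_eq_conjTranspose,
    hL.posDef_star_left_conjugate_iff]
  exact .diagonal (by rintro (i | i) <;> assumption)

end BlockFactorization

/-- The open-delta coupling pattern: `Y6 = y_t · openDeltaCoupling`. -/
noncomputable def openDeltaCoupling : Matrix (Fin 2) (Fin 3) ℝ :=
  (√3)⁻¹ • !![-1, 1, 0; 0, -1, 1]

theorem map_re_smul_one {n : Type*} [DecidableEq n] (z : ℂ) :
    (z • (1 : Matrix n n ℂ)).map Complex.re = z.re • 1 := by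
  ext i j
  by_cases hij : i = j <;> simp [one_apply, hij]

theorem map_re_smul_openDeltaCoupling (z : ℂ) :
    ((z / (√3 : ℂ)) • !![(-1 : ℂ), 1, 0; 0, -1, 1]).map Complex.re =
      z.re • openDeltaCoupling := by
  have hre : (z / (√3 : ℂ)).re = z.re * (√3)⁻¹ := Complex.div_ofReal_re ..
  generalize z / (√3 : ℂ) = c at hre
  ext i j
  fin_cases i <;> fin_cases j <;> simp [openDeltaCoupling, hre]

theorem map_re_smul_gram_openDeltaCoupling (z : ℂ) :
    ((z / 3) • !![(1 : ℂ), -1, 0; -1, 2, -1; 0, -1, 1]).map Complex.re =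
      z.re • (openDeltaCouplingᴴ * openDeltaCoupling) := by
  have hre : (z / 3).re = z.re / 3 := by exact_mod_cast Complex.div_ofReal_re z 3
  have hsqrt : (√3)⁻¹ * (√3)⁻¹ = (3 : ℝ)⁻¹ := by
    rw [← mul_inv, Real.mul_self_sqrt zero_le_three]
  ext i j
  fin_cases i <;> fin_cases j <;>
    simp [openDeltaCoupling, hre, hsqrt, mul_apply, Fin.sum_univ_succ] <;> ring

/-- Key positive-definiteness claim in the proof of Theorem 4: the open-wye--open-delta
block `G_{OYΔ} = [[Re Y5, Re Y6], [Re Y6ᵀ, Re Y4 + ε I]]` is positive definite when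
`Re[y_t] > 0` and `ε > 0`. -/
theorem G_OYDelta_posDef (yt : ℂ) (h : 0 < yt.re) (ε : ℝ) (hε : 0 < ε)
    (Y4 : Matrix (Fin 3) (Fin 3) ℂ) (Y5 : Matrix (Fin 2) (Fin 2) ℂ)
    (Y6 : Matrix (Fin 2) (Fin 3) ℂ)
    (hY4 : Y4 = (yt / 3) • !![(1 : ℂ), -1, 0; -1, 2, -1; 0, -1, 1])
    (hY5 : Y5 = yt • (1 : Matrix (Fin 2) (Fin 2) ℂ))
    (hY6 : Y6 = (yt / (Real.sqrt 3 : ℂ)) • !![(-1 : ℂ), 1, 0; 0, -1, 1])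
    (G : Matrix (Fin 2 ⊕ Fin 3) (Fin 2 ⊕ Fin 3) ℝ)
    (hG : G = Matrix.fromBlocks (Y5.map Complex.re) (Y6.map Complex.re)
      ((Y6.map Complex.re)ᵀ)
      (Y4.map Complex.re + ε • (1 : Matrix (Fin 3) (Fin 3) ℝ))) :
    ∀ x : Fin 2 ⊕ Fin 3 → ℝ, x ≠ 0 → 0 < x ⬝ᵥ (G *ᵥ x) := by
  intro x hx
  have hGpos : G.PosDef := by
    rw [hG, hY4, hY5, hY6, map_re_smul_one, map_re_smul_openDeltaCoupling,
      map_re_smul_gram_openDeltaCoupling, transpose_smul, ← conjTranspose_eq_transpose_of_trivial]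
    exact posDef_fromBlocks_smul_one openDeltaCoupling h hε
  simpa using hGpos.dotProduct_mulVec_pos hx
end
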